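/- arXiv:1908.04948 — 3 statements merged into one kernel-verified Lean document; each statement's English description precedes it below -/
import Mathlib

section
/- Let μ > 0, let a < b be real numbers, let ψ : [a,b] → ℝ be a continuously differentiable, increasing function with ψ'(t) > 0 for all t ∈ [a,b], let u, v : [a,b] → ℝ be nonnegative, bounded, integrable functions with v nondecreasing, and let g : [a,b] → ℝ be nonnegative, continuous and nondecreasing. If u(t) ≤ v(t) + g(t) ∫_a^t ψ'(s)(ψ(t)−ψ(s))^{μ−1} u(s) ds for every t ∈ [a,b], then u(t) ≤ v(t) · E_μ( g(t)Γ(μ)(ψ(t)−ψ(a))^μ ) for every t ∈ [a,b]. -/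
/-!
Fix `t` and freeze the nondecreasing `v` and `g` at `t`: on `[a, t]` one has `u ≤ V + G · J u`
with constants `V = v t`, `G = g t`, where `J φ (s) = ∫_a^s ψ'(r) (ψ s - ψ r)^(μ-1) φ(r) dr` is a
positive operator. Iterating `n` times and bounding `u` by `M` in the remainder gives
`u ≤ V ∑_{k<n} T_k + M T_n`, where `T_k = (G Γ(μ) (ψ - ψ a)^μ)^k / Γ(μ k + 1) = (G J)^k 1`: the
substitution `x = ψ r - ψ a` turns `J (ψ - ψ a)^e` into a Beta integral. The `T_k` are the terms of
the Mittag-Leffler series, which converges because `Γ(y + μ) / Γ(y) ≥ (y - 1)^μ` by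
log-convexity of `Γ`; letting `n → ∞` gives the bound.
-/

open Set intervalIntegral

/-- The one-parameter Mittag-Leffler function `E_μ(x) = ∑_{k=0}^∞ xᵏ / Γ(μ k + 1)`. -/
noncomputable def mittagLeffler (μ x : ℝ) : ℝ :=
  ∑' k : ℕ, x ^ k / Real.Gamma (μ * k + 1)

open MeasureTheory Filter Real

theorem rpow_sub_one_le_Gamma_add_div_Gamma {y μ : ℝ} (hy : 1 < y) (hμ : 0 < μ) :
    (y - 1) ^ μ ≤ Gamma (y + μ) / Gamma y := by
  have hΓ : 0 < Gamma (y - 1) := Gamma_pos_of_pos (by linarith)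
  have hΓy : 0 < Gamma y := Gamma_pos_of_pos (by linarith)
  -- the slope of `log ∘ Γ` on `[y, y + μ]` is at least its slope `log (y - 1)` on `[y - 1, y]`
  have hslope := convexOn_log_Gamma.slope_mono_adjacent (x := y - 1) (y := y) (z := y + μ)
    (mem_Ioi.2 (by linarith)) (mem_Ioi.2 (by linarith)) (by linarith) (by linarith)
  have hrec : Gamma y = (y - 1) * Gamma (y - 1) := by
    simpa using Gamma_add_one (s := y - 1) (by linarith)
  have hlog : log (Gamma y) - log (Gamma (y - 1)) = log (y - 1) := by
    rw [hrec, log_mul (by linarith) hΓ.ne', add_sub_cancel_right]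
  simp only [Function.comp_apply, sub_sub_cancel, div_one, add_sub_cancel_left, hlog] at hslope
  rw [le_div_iff₀ hμ] at hslope
  rw [le_div_iff₀ hΓy, ← log_le_log_iff (by positivity) (Gamma_pos_of_pos (by linarith)),
    log_mul (by positivity) hΓy.ne', log_rpow (by linarith)]
  linarith

theorem summable_mittagLeffler {μ : ℝ} (hμ : 0 < μ) (x : ℝ) :
    Summable fun k : ℕ => x ^ k / Gamma (μ * k + 1) := by
  refine summable_of_ratio_norm_eventually_le (r := 1 / 2) (by norm_num) ?_
  have hgrowth : Tendsto (fun k : ℕ => (μ * k) ^ μ) atTop atTop :=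
    (tendsto_rpow_atTop hμ).comp (tendsto_natCast_atTop_atTop.const_mul_atTop hμ)
  filter_upwards [hgrowth.eventually_ge_atTop (2 * |x|), eventually_ge_atTop 1] with k hk hk1
  have hy : 1 < μ * k + 1 := by
    have : (1 : ℝ) ≤ k := by exact_mod_cast hk1
    nlinarith
  have hΓ : 0 < Gamma (μ * k + 1) := Gamma_pos_of_pos (by linarith)
  have hΓ' : 0 < Gamma (μ * k + 1 + μ) := Gamma_pos_of_pos (by linarith)
  have hratio := rpow_sub_one_le_Gamma_add_div_Gamma hy hμ
  rw [add_sub_cancel_right, le_div_iff₀ hΓ] at hratio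
  simp only [norm_div, norm_pow, Real.norm_eq_abs]
  rw [abs_of_pos hΓ, Nat.cast_succ, mul_add_one, add_right_comm, abs_of_pos hΓ', pow_succ,
    div_le_iff₀ hΓ']
  calc |x| ^ k * |x| = 1 / 2 * (|x| ^ k / Gamma (μ * k + 1)) * (2 * |x| * Gamma (μ * k + 1)) := by
        field_simp
    _ ≤ 1 / 2 * (|x| ^ k / Gamma (μ * k + 1)) * Gamma (μ * k + 1 + μ) := by
        gcongr
        exact (mul_le_mul_of_nonneg_right hk hΓ.le).trans hratio

theorem le_mul_mittagLeffler_of_forall_le {μ x y V M : ℝ} (hμ : 0 < μ)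
    (h : ∀ n : ℕ, y ≤ V * ∑ k ∈ Finset.range n, x ^ k / Gamma (μ * k + 1)
      + M * (x ^ n / Gamma (μ * n + 1))) :
    y ≤ V * mittagLeffler μ x := by
  have hs := summable_mittagLeffler hμ x
  have hlim := (hs.hasSum.tendsto_sum_nat.const_mul V).add (hs.tendsto_atTop_zero.const_mul M)
  rw [mul_zero, add_zero] at hlim
  exact ge_of_tendsto' hlim h

theorem integral_rpow_mul_sub_rpow {p q L : ℝ} (hp : 0 < p) (hq : 0 < q) (hL : 0 < L) :
    ∫ x in (0)..L, x ^ (q - 1) * (L - x) ^ (p - 1)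
      = Gamma q * Gamma p / Gamma (q + p) * L ^ (q + p - 1) := by
  have hB := Complex.betaIntegral_scaled q p hL
  rw [Complex.betaIntegral_eq_Gamma_mul_div _ _ (by simpa) (by simpa), ← Complex.ofReal_add,
    Complex.Gamma_ofReal, Complex.Gamma_ofReal, Complex.Gamma_ofReal] at hB
  apply Complex.ofReal_injective
  rw [← intervalIntegral.integral_ofReal]
  convert hB using 1
  · refine intervalIntegral.integral_congr fun x hx => ?_
    rw [uIcc_of_le hL.le] at hx
    push_cast [Complex.ofReal_cpow hx.1, Complex.ofReal_cpow (sub_nonneg.2 hx.2)]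
    rfl
  · push_cast [Complex.ofReal_cpow hL.le, Complex.Gamma_ofReal]
    ring

section Kernel

variable {ψ ψ' : ℝ → ℝ} {a t μ : ℝ}

theorem integral_kernel_mul_rpow (hμ : 0 < μ) {e : ℝ} (he : -1 < e) (hat : a < t)
    (hψ : ∀ s ∈ Icc a t, HasDerivAt ψ (ψ' s) s) (hψ' : ∀ s ∈ Icc a t, 0 ≤ ψ' s)
    (hmono : StrictMonoOn ψ (Icc a t)) :
    ∫ s in Ioc a t, ψ' s * (ψ t - ψ s) ^ (μ - 1) * (ψ s - ψ a) ^ e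
      = Gamma (e + 1) * Gamma μ / Gamma (e + 1 + μ) * (ψ t - ψ a) ^ (e + μ) := by
  have hL : 0 < ψ t - ψ a :=
    sub_pos.2 (hmono (left_mem_Icc.2 hat.le) (right_mem_Icc.2 hat.le) hat)
  have hsub : Ioc a t ⊆ Icc a t := Ioc_subset_Icc_self
  set f : ℝ → ℝ := fun s => ψ s - ψ a
  have hf' : ∀ s ∈ Ioc a t, HasDerivWithinAt f (ψ' s) (Ioc a t) s := fun s hs =>
    ((hψ s (hsub hs)).sub_const _).hasDerivWithinAt
  have hinj : InjOn f (Ioc a t) := fun x hx y hy hxy =>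
    hmono.injOn (hsub hx) (hsub hy) (sub_left_inj.1 hxy)
  have himage : f '' Ioc a t = Ioc 0 (ψ t - ψ a) := by
    refine Subset.antisymm ?_ ?_
    · rintro _ ⟨s, hs, rfl⟩
      exact ⟨sub_pos.2 (hmono (left_mem_Icc.2 hat.le) (hsub hs) hs.1),
        sub_le_sub_right (hmono.monotoneOn (hsub hs) (right_mem_Icc.2 hat.le) hs.2) _⟩
    · simpa [f] using intermediate_value_Ioc hat.le (f := f)
        fun s hs => ((hψ s hs).continuousAt.sub continuousAt_const).continuousWithinAt
  have hcov := integral_image_eq_integral_abs_deriv_smul measurableSet_Ioc hf' hinj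
    fun x => x ^ (e + 1 - 1) * (ψ t - ψ a - x) ^ (μ - 1)
  rw [himage, ← intervalIntegral.integral_of_le hL.le,
    integral_rpow_mul_sub_rpow hμ (by linarith) hL] at hcov
  rw [show e + μ = e + 1 + μ - 1 by ring, hcov]
  refine setIntegral_congr_fun measurableSet_Ioc fun s hs => ?_
  simp only [f, smul_eq_mul, abs_of_nonneg (hψ' s (hsub hs)), add_sub_cancel_right,
    sub_sub_sub_cancel_right]
  ring

theorem integrableOn_kernel_mul_rpow (hμ : 0 < μ) {e : ℝ} (he : -1 < e) (hat : a ≤ t)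
    (hψ : ∀ s ∈ Icc a t, HasDerivAt ψ (ψ' s) s) (hψ' : ∀ s ∈ Icc a t, 0 ≤ ψ' s)
    (hmono : StrictMonoOn ψ (Icc a t)) :
    IntegrableOn (fun s => ψ' s * (ψ t - ψ s) ^ (μ - 1) * (ψ s - ψ a) ^ e) (Ioc a t) := by
  rcases hat.eq_or_lt with rfl | hat
  · simp
  have hL : 0 < ψ t - ψ a :=
    sub_pos.2 (hmono (left_mem_Icc.2 hat.le) (right_mem_Icc.2 hat.le) hat)
  -- a function that is not integrable has integral `0`
  refine Integrable.of_integral_ne_zero ?_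
  rw [integral_kernel_mul_rpow hμ he hat hψ hψ' hmono]
  have := Gamma_pos_of_pos (show 0 < e + 1 by linarith)
  have := Gamma_pos_of_pos hμ
  have := Gamma_pos_of_pos (show 0 < e + 1 + μ by linarith)
  positivity

theorem integrableOn_kernel_mul_pow_div_Gamma (hμ : 0 < μ) (hat : a ≤ t)
    (hψ : ∀ s ∈ Icc a t, HasDerivAt ψ (ψ' s) s) (hψ' : ∀ s ∈ Icc a t, 0 ≤ ψ' s)
    (hmono : StrictMonoOn ψ (Icc a t)) (G : ℝ) (k : ℕ) :
    IntegrableOn (fun s => ψ' s * (ψ t - ψ s) ^ (μ - 1)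
      * ((G * Gamma μ * (ψ s - ψ a) ^ μ) ^ k / Gamma (μ * k + 1))) (Ioc a t) := by
  have he : -1 < μ * k := by linarith [show 0 ≤ μ * k by positivity]
  refine IntegrableOn.congr_fun ((integrableOn_kernel_mul_rpow hμ he hat hψ hψ' hmono).const_mul
    ((G * Gamma μ) ^ k / Gamma (μ * k + 1))) (fun s hs => ?_) measurableSet_Ioc
  rw [mul_pow _ ((ψ s - ψ a) ^ μ), ← rpow_mul_natCast (sub_nonneg.2
    (hmono.monotoneOn (left_mem_Icc.2 hat) (Ioc_subset_Icc_self hs) hs.1.le))]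
  ring

theorem mul_integral_kernel_mul_pow_div_Gamma (hμ : 0 < μ) (hat : a ≤ t)
    (hψ : ∀ s ∈ Icc a t, HasDerivAt ψ (ψ' s) s) (hψ' : ∀ s ∈ Icc a t, 0 ≤ ψ' s)
    (hmono : StrictMonoOn ψ (Icc a t)) (G : ℝ) (k : ℕ) :
    G * ∫ s in Ioc a t, ψ' s * (ψ t - ψ s) ^ (μ - 1)
        * ((G * Gamma μ * (ψ s - ψ a) ^ μ) ^ k / Gamma (μ * k + 1))
      = (G * Gamma μ * (ψ t - ψ a) ^ μ) ^ (k + 1) / Gamma (μ * ↑(k + 1) + 1) := by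
  rcases hat.eq_or_lt with rfl | hat
  · simp [zero_rpow hμ.ne']
  have hψa : ∀ s ∈ Icc a t, 0 ≤ ψ s - ψ a := fun s hs =>
    sub_nonneg.2 (hmono.monotoneOn (left_mem_Icc.2 hat.le) hs hs.1)
  have hΓk := Gamma_pos_of_pos (show 0 < μ * k + 1 by positivity)
  have hcongr : ∀ s ∈ Ioc a t, ψ' s * (ψ t - ψ s) ^ (μ - 1)
        * ((G * Gamma μ * (ψ s - ψ a) ^ μ) ^ k / Gamma (μ * k + 1))
      = (G * Gamma μ) ^ k / Gamma (μ * k + 1)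
        * (ψ' s * (ψ t - ψ s) ^ (μ - 1) * (ψ s - ψ a) ^ (μ * k)) := fun s hs => by
    rw [mul_pow _ ((ψ s - ψ a) ^ μ), ← rpow_mul_natCast (hψa s (Ioc_subset_Icc_self hs))]
    ring
  have he : -1 < μ * k := by linarith [show 0 ≤ μ * k by positivity]
  rw [setIntegral_congr_fun measurableSet_Ioc hcongr, MeasureTheory.integral_const_mul,
    integral_kernel_mul_rpow hμ he hat hψ hψ' hmono, mul_pow (G * Gamma μ),
    ← rpow_mul_natCast (hψa t (right_mem_Icc.2 hat.le))]
  push_cast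
  rw [show μ * (k + 1) = μ * k + μ by ring, add_right_comm]
  field_simp
  ring

theorem le_sum_add_of_le_add_mul_integral_kernel (hμ : 0 < μ)
    (hψ : ∀ s ∈ Icc a t, HasDerivAt ψ (ψ' s) s) (hψ' : ∀ s ∈ Icc a t, 0 ≤ ψ' s)
    (hmono : StrictMonoOn ψ (Icc a t)) {u : ℝ → ℝ} {V G M : ℝ} (hG : 0 ≤ G)
    (hu₀ : ∀ s ∈ Icc a t, 0 ≤ u s) (huM : ∀ s ∈ Icc a t, u s ≤ M)
    (hu : ∀ s ∈ Icc a t, u s ≤ V + G * ∫ r in Ioc a s, ψ' r * (ψ s - ψ r) ^ (μ - 1) * u r)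
    (n : ℕ) (s : ℝ) (hs : s ∈ Icc a t) :
    u s ≤ V * ∑ k ∈ Finset.range n, (G * Gamma μ * (ψ s - ψ a) ^ μ) ^ k / Gamma (μ * k + 1)
      + M * ((G * Gamma μ * (ψ s - ψ a) ^ μ) ^ n / Gamma (μ * n + 1)) := by
  induction n generalizing s with
  | zero => simpa using huM s hs
  | succ n ih =>
    have hsub : Icc a s ⊆ Icc a t := Icc_subset_Icc_right hs.2
    have hψs : ∀ r ∈ Icc a s, HasDerivAt ψ (ψ' r) r := fun r hr => hψ r (hsub hr)
    have hψ's : ∀ r ∈ Icc a s, 0 ≤ ψ' r := fun r hr => hψ' r (hsub hr)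
    set T : ℕ → ℝ → ℝ := fun k r => (G * Gamma μ * (ψ r - ψ a) ^ μ) ^ k / Gamma (μ * k + 1)
    set K : ℝ → ℝ := fun r => ψ' r * (ψ s - ψ r) ^ (μ - 1)
    have hK : ∀ r ∈ Ioc a s, 0 ≤ K r := fun r hr =>
      mul_nonneg (hψ's r (Ioc_subset_Icc_self hr)) (rpow_nonneg (sub_nonneg.2
        ((hmono.mono hsub).monotoneOn (Ioc_subset_Icc_self hr) (right_mem_Icc.2 hs.1) hr.2)) _)
    have hKT : ∀ k, IntegrableOn (fun r => K r * T k r) (Ioc a s) := fun k =>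
      integrableOn_kernel_mul_pow_div_Gamma hμ hs.1 hψs hψ's (hmono.mono hsub) G k
    have hstep : ∀ k, G * ∫ r in Ioc a s, K r * T k r = T (k + 1) s := fun k =>
      mul_integral_kernel_mul_pow_div_Gamma hμ hs.1 hψs hψ's (hmono.mono hsub) G k
    have hbound : ∫ r in Ioc a s, K r * u r
        ≤ ∫ r in Ioc a s, K r * (V * ∑ k ∈ Finset.range n, T k r + M * T n r) :=
      setIntegral_mono_of_nonneg
        (fun r hr => mul_nonneg (hK r hr) (hu₀ r (hsub (Ioc_subset_Icc_self hr))))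
        (fun r hr => mul_le_mul_of_nonneg_left (ih r (hsub (Ioc_subset_Icc_self hr))) (hK r hr))
        (IntegrableOn.congr_fun
          ((integrable_finsetSum _ fun k _ => (hKT k).const_mul V).add ((hKT n).const_mul M))
          (fun r _ => by simp only [mul_add, Finset.mul_sum, mul_left_comm (K r)]; rfl)
          measurableSet_Ioc)
    have hiterate : G * ∫ r in Ioc a s, K r * (V * ∑ k ∈ Finset.range n, T k r + M * T n r)
        = V * ∑ k ∈ Finset.range n, T (k + 1) s + M * T (n + 1) s := by
      simp only [mul_add, Finset.mul_sum, mul_left_comm (K _)]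
      rw [integral_add (integrable_finsetSum _ fun k _ => (hKT k).const_mul V)
        ((hKT n).const_mul M), integral_finsetSum _ fun k _ => (hKT k).const_mul V]
      simp only [MeasureTheory.integral_const_mul, mul_add, Finset.mul_sum, mul_left_comm G, hstep]
    calc u s ≤ V + G * ∫ r in Ioc a s, K r * u r := hu s hs
      _ ≤ V + G * ∫ r in Ioc a s, K r * (V * ∑ k ∈ Finset.range n, T k r + M * T n r) :=
        add_le_add_right (mul_le_mul_of_nonneg_left hbound hG) V
      _ = V * ∑ k ∈ Finset.range (n + 1), T k s + M * T (n + 1) s := by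
        rw [hiterate, Finset.sum_range_succ']
        simp only [T, pow_zero, CharP.cast_eq_zero, mul_zero, zero_add, Gamma_one, div_one]
        ring

end Kernel

theorem fractional_gronwall_lemma_general
    (μ a b : ℝ) (hμ : 0 < μ)
    (ψ ψ' : ℝ → ℝ)
    (hψdiff : ∀ t ∈ Icc a b, HasDerivAt ψ (ψ' t) t)
    (hψ'pos : ∀ t ∈ Icc a b, 0 < ψ' t)
    (hψmono : StrictMonoOn ψ (Icc a b))
    (u v g : ℝ → ℝ)
    (hu_nonneg : ∀ t ∈ Icc a b, 0 ≤ u t)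
    (hu_bdd : BddAbove (u '' Icc a b))
    (hv_mono : MonotoneOn v (Icc a b))
    (hg_nonneg : ∀ t ∈ Icc a b, 0 ≤ g t)
    (hg_mono : MonotoneOn g (Icc a b))
    (hineq : ∀ t ∈ Icc a b,
      u t ≤ v t + g t * ∫ s in a..t, ψ' s * (ψ t - ψ s) ^ (μ - 1) * u s) :
    ∀ t ∈ Icc a b,
      u t ≤ v t * mittagLeffler μ (g t * Real.Gamma μ * (ψ t - ψ a) ^ μ) := by
  intro t ht
  have hsub : Icc a t ⊆ Icc a b := Icc_subset_Icc_right ht.2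
  obtain ⟨M, hM⟩ := hu_bdd
  have hfrozen : ∀ s ∈ Icc a t,
      u s ≤ v t + g t * ∫ r in Ioc a s, ψ' r * (ψ s - ψ r) ^ (μ - 1) * u r := by
    intro s hs
    have hJ : 0 ≤ ∫ r in Ioc a s, ψ' r * (ψ s - ψ r) ^ (μ - 1) * u r := by
      refine setIntegral_nonneg measurableSet_Ioc fun r hr => ?_
      have hr' : r ∈ Icc a b := hsub ⟨hr.1.le, hr.2.trans hs.2⟩
      have := hψ'pos r hr'
      have := hu_nonneg r hr'
      have := sub_nonneg.2 (hψmono.monotoneOn hr' (hsub hs) hr.2)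
      positivity
    calc u s ≤ v s + g s * ∫ r in Ioc a s, ψ' r * (ψ s - ψ r) ^ (μ - 1) * u r := by
          simpa only [intervalIntegral.integral_of_le hs.1] using hineq s (hsub hs)
      _ ≤ v t + g t * ∫ r in Ioc a s, ψ' r * (ψ s - ψ r) ^ (μ - 1) * u r := by
          gcongr
          · exact hv_mono (hsub hs) ht hs.2
          · exact hg_mono (hsub hs) ht hs.2
  exact le_mul_mittagLeffler_of_forall_le hμ fun n =>
    le_sum_add_of_le_add_mul_integral_kernel hμ (fun s hs => hψdiff s (hsub hs))
      (fun s hs => (hψ'pos s (hsub hs)).le) (hψmono.mono hsub) (hg_nonneg t ht)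
      (fun s hs => hu_nonneg s (hsub hs)) (fun s hs => hM (mem_image_of_mem u (hsub hs))) hfrozen
      n t (right_mem_Icc.2 ht.1)

/-- Gronwall lemma for the fractional integral with respect to another function `ψ`,
with nondecreasing `v`: if
`u(t) ≤ v(t) + g(t) ∫_a^t ψ'(s) (ψ(t) - ψ(s))^(μ-1) u(s) ds` on `[a, b]`, then
`u(t) ≤ v(t) · E_μ(g(t) Γ(μ) (ψ(t) - ψ(a))^μ)` on `[a, b]`. -/
theorem fractional_gronwall_lemma
    (μ a b : ℝ) (hμ : 0 < μ) (hab : a < b)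
    (ψ ψ' : ℝ → ℝ)
    (hψdiff : ∀ t ∈ Icc a b, HasDerivAt ψ (ψ' t) t)
    (hψ'cont : ContinuousOn ψ' (Icc a b))
    (hψ'pos : ∀ t ∈ Icc a b, 0 < ψ' t)
    (hψmono : StrictMonoOn ψ (Icc a b))
    (u v g : ℝ → ℝ)
    (hu_nonneg : ∀ t ∈ Icc a b, 0 ≤ u t)
    (hv_nonneg : ∀ t ∈ Icc a b, 0 ≤ v t)
    (hu_bdd : BddAbove (u '' Icc a b))
    (hv_bdd : BddAbove (v '' Icc a b))
    (hu_int : MeasureTheory.IntegrableOn u (Icc a b))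
    (hv_int : MeasureTheory.IntegrableOn v (Icc a b))
    (hv_mono : MonotoneOn v (Icc a b))
    (hg_nonneg : ∀ t ∈ Icc a b, 0 ≤ g t)
    (hg_cont : ContinuousOn g (Icc a b))
    (hg_mono : MonotoneOn g (Icc a b))
    (hineq : ∀ t ∈ Icc a b,
      u t ≤ v t + g t * ∫ s in a..t, ψ' s * (ψ t - ψ s) ^ (μ - 1) * u s) :
    ∀ t ∈ Icc a b,
      u t ≤ v t * mittagLeffler μ (g t * Real.Gamma μ * (ψ t - ψ a) ^ μ) :=
  fractional_gronwall_lemma_general μ a b hμ ψ ψ' hψdiff hψ'pos hψmono u v g hu_nonneg hu_bdd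
    hv_mono hg_nonneg hg_mono hineq
end

section
/- With the data of the nonlocal fractional evolution setup, the operator F maps C(J,Ω) into itself, and for all continuous ω, ω̃ : J → Ω one has sup_{t∈J} ‖(Fω)(t) − (Fω̃)(t)‖ ≤ (r+1)·L·M·a·(1 + M‖B‖·C̃·Σ_{k=1}^p |C_k|) · sup_{t∈J} ‖ω(t) − ω̃(t)‖, where C̃ = a^{1−γ}/Γ(2−γ); that is, F is Lipschitz on (C(J,Ω), sup norm) with constant q̃ := (r+1)LMa(1 + M‖B‖C̃ Σ_{k=1}^p |C_k|). -/
/-!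
The nonlocal term and the convolution term of `F` are both controlled through the Volterra
operator `g ↦ ∫_{t₀}^t K(t-s) g(s) ds`. A uniformly bounded, strongly continuous family of
operators is jointly continuous in `(t, x)`; extending the integrand continuously beyond `J`,
the Volterra operator therefore maps continuous functions to continuous ones, and it has norm at
most `M a` for the sup norm. The Lipschitz bound on `f` turns a sup-distance `D` between `ω` and
`ω̃` into a distance `(r+1) L D` between the nonlinear terms, and the Riemann–Liouville integral
of order `δ = 1-γ` of a function bounded by `C` on `J` is bounded by
`a^δ / Γ(δ+1) · C = C̃ C`. Adding the two contributions gives `q̃`.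
-/

open Set intervalIntegral

/-- The Riemann–Liouville fractional integral
`(I_{t₀⁺}^δ g)(t) = (1/Γ(δ)) ∫_{t₀}^t (t-s)^(δ-1) g(s) ds` (Bochner integral). -/
noncomputable def fracInt {Ω : Type*} [NormedAddCommGroup Ω] [NormedSpace ℝ Ω]
    (δ t₀ : ℝ) (g : ℝ → Ω) (t : ℝ) : Ω :=
  (1 / Real.Gamma δ) • ∫ s in t₀..t, ((t - s) ^ (δ - 1)) • g s

/-- The tuple `(ω(s), ω(b₁(s)), …, ω(b_r(s)))` fed into the nonlinearity `f`. -/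
noncomputable def fArgs {Ω : Type*} {r : ℕ} (b : Fin r → ℝ → ℝ) (ω : ℝ → Ω) (s : ℝ) :
    Fin (r + 1) → Ω :=
  Fin.cons (ω s) fun i => ω (b i s)

/-- `h_ω(τ) = ∫_{t₀}^τ K(τ - s) f(s, ω(s), ω(b₁(s)), …, ω(b_r(s))) ds`. -/
noncomputable def convMap {Ω : Type*} [NormedAddCommGroup Ω] [NormedSpace ℝ Ω] {r : ℕ}
    (K : ℝ → Ω →L[ℝ] Ω) (t₀ : ℝ) (f : ℝ → (Fin (r + 1) → Ω) → Ω)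
    (b : Fin r → ℝ → ℝ) (ω : ℝ → Ω) (τ : ℝ) : Ω :=
  ∫ s in t₀..τ, (K (τ - s)) (f s (fArgs b ω s))

/-- The solution operator
`(Fω)(t) = S(t-t₀) B u₀ + ∫_{t₀}^t K(t-s) f(s, ω(s), ω(b₁(s)), …, ω(b_r(s))) ds
  - S(t-t₀) B ∑_{k=1}^p C_k (I_{t₀⁺}^{1-γ} h_ω)(t_k)`. -/
noncomputable def Fop {Ω : Type*} [NormedAddCommGroup Ω] [NormedSpace ℝ Ω] {r p : ℕ}
    (S K : ℝ → Ω →L[ℝ] Ω) (t₀ γ : ℝ) (B : Ω →L[ℝ] Ω) (u₀ : Ω)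
    (tk : Fin p → ℝ) (Ck : Fin p → ℝ) (f : ℝ → (Fin (r + 1) → Ω) → Ω)
    (b : Fin r → ℝ → ℝ) (ω : ℝ → Ω) (t : ℝ) : Ω :=
  S (t - t₀) (B u₀) + convMap K t₀ f b ω t
    - S (t - t₀) (B (∑ k, Ck k • fracInt (1 - γ) t₀ (convMap K t₀ f b ω) (tk k)))


open MeasureTheory Filter Topology

theorem ContinuousLinearMap.continuousOn_uncurry_of_norm_le {X 𝕜 E F : Type*}
    [TopologicalSpace X] [NontriviallyNormedField 𝕜] [SeminormedAddCommGroup E]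
    [NormedSpace 𝕜 E] [SeminormedAddCommGroup F] [NormedSpace 𝕜 F]
    {T : X → E →L[𝕜] F} {s : Set X} {M : ℝ}
    (hT : ∀ x, ContinuousOn (fun t => T t x) s) (hM : ∀ t ∈ s, ‖T t‖ ≤ M) :
    ContinuousOn (fun q : X × E => T q.1 q.2) (s ×ˢ univ) := by
  rintro ⟨t, x⟩ ⟨ht, -⟩
  -- `T q.1 q.2 = T q.1 (q.2 - x) + T q.1 x`: the first term is uniformly small, the second
  -- converges by strong continuity.
  have hsmall : Tendsto (fun q : X × E => T q.1 (q.2 - x)) (𝓝[s ×ˢ univ] (t, x)) (𝓝 0) := by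
    have hlim : Tendsto (fun q : X × E => M * ‖q.2 - x‖) (𝓝 (t, x)) (𝓝 0) :=
      (by fun_prop : Continuous fun q : X × E => M * ‖q.2 - x‖).tendsto' _ _ (by simp)
    refine squeeze_zero_norm' ?_ (hlim.mono_left nhdsWithin_le_nhds)
    filter_upwards [self_mem_nhdsWithin] with q hq
    exact (T q.1).le_of_opNorm_le (hM q.1 hq.1) _
  have hstrong : ContinuousWithinAt (fun q : X × E => T q.1 x) (s ×ˢ univ) (t, x) :=
    ContinuousWithinAt.comp (g := fun t => T t x) (hT x t ht) continuousWithinAt_fst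
      fun _ hq => (mem_prod.1 hq).1
  simpa only [ContinuousWithinAt, map_sub, sub_add_cancel, zero_add] using
    hsmall.add hstrong.tendsto

theorem IsCompact.norm_le_iSup_norm {X E : Type*} [TopologicalSpace X] [SeminormedAddCommGroup E]
    {s : Set X} {φ : X → E} {u : X} (hs : IsCompact s) (hφ : ContinuousOn φ s) (hu : u ∈ s) :
    ‖φ u‖ ≤ ⨆ t : s, ‖φ t‖ :=
  le_ciSup (image_eq_range _ _ ▸ (hs.image_of_continuousOn hφ.norm).bddAbove) ⟨u, hu⟩

theorem nonneg_of_norm_sub_le_mul_sum_norm_sub {ι E G : Type*} [Fintype ι] [Nonempty ι]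
    [NormedAddCommGroup E] [Nontrivial E] [SeminormedAddCommGroup G] {φ : (ι → E) → G} {L : ℝ}
    (hφ : ∀ z w, ‖φ z - φ w‖ ≤ L * ∑ i, ‖z i - w i‖) : 0 ≤ L := by
  obtain ⟨x, hx⟩ := exists_ne (0 : E)
  have hpos : 0 < ∑ _i : ι, ‖x‖ :=
    Finset.sum_pos (fun _ _ => norm_pos_iff.2 hx) Finset.univ_nonempty
  have hprod := (norm_nonneg _).trans (hφ (fun _ => x) 0)
  simp only [Pi.zero_apply, sub_zero] at hprod
  exact nonneg_of_mul_nonneg_left hprod hpos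

section Volterra

variable {E F : Type*} [NormedAddCommGroup E] [NormedSpace ℝ E] [NormedAddCommGroup F]
  [NormedSpace ℝ F] {K : ℝ → E →L[ℝ] F} {t₀ a M τ C : ℝ} {g h : ℝ → E}

noncomputable def volterraConv (K : ℝ → E →L[ℝ] F) (t₀ : ℝ) (g : ℝ → E) (t : ℝ) : F :=
  ∫ s in t₀..t, K (t - s) (g s)

theorem exists_continuous_extension_volterra_integrand (ha : 0 ≤ a)
    (hK : ∀ x, ContinuousOn (fun t => K t x) (Icc 0 a)) (hKM : ∀ t ∈ Icc 0 a, ‖K t‖ ≤ M)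
    (hg : ContinuousOn g (Icc t₀ (t₀ + a))) :
    ∃ G : ℝ → ℝ → F, Continuous (Function.uncurry G) ∧
      ∀ t ∈ Icc t₀ (t₀ + a), ∀ s ∈ Icc t₀ t, G t s = K (t - s) (g s) := by
  have hJ : t₀ ≤ t₀ + a := by linarith
  refine ⟨fun t s => K (projIcc 0 a ha (t - s)) (g (projIcc t₀ (t₀ + a) hJ s)), ?_, ?_⟩
  · have hproj : Continuous fun q : ℝ × ℝ =>
        ((projIcc 0 a ha (q.1 - q.2) : ℝ), g (projIcc t₀ (t₀ + a) hJ q.2)) :=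
      (continuous_subtype_val.comp (continuous_projIcc.comp
        (continuous_fst.sub continuous_snd))).prodMk
        (hg.comp_continuous (continuous_subtype_val.comp (continuous_projIcc.comp
          continuous_snd)) fun _ => Subtype.mem _)
    exact (ContinuousLinearMap.continuousOn_uncurry_of_norm_le hK hKM).comp_continuous hproj
      fun _ => ⟨Subtype.mem _, trivial⟩
  · intro t ht s hs
    have hts : t - s ∈ Icc 0 a := ⟨by linarith [hs.2], by linarith [hs.1, ht.2]⟩
    simp [projIcc_of_mem ha hts, projIcc_of_mem hJ ⟨hs.1, hs.2.trans ht.2⟩]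

theorem intervalIntegrable_volterra_integrand (ha : 0 ≤ a)
    (hK : ∀ x, ContinuousOn (fun t => K t x) (Icc 0 a)) (hKM : ∀ t ∈ Icc 0 a, ‖K t‖ ≤ M)
    (hg : ContinuousOn g (Icc t₀ (t₀ + a))) (hτ : τ ∈ Icc t₀ (t₀ + a)) :
    IntervalIntegrable (fun s => K (τ - s) (g s)) volume t₀ τ := by
  obtain ⟨G, hGc, hG⟩ := exists_continuous_extension_volterra_integrand ha hK hKM hg
  refine ContinuousOn.intervalIntegrable ?_
  rw [uIcc_of_le hτ.1]
  exact (hGc.comp (continuous_const.prodMk continuous_id)).continuousOn.congr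
    fun s hs => (hG τ hτ s hs).symm

theorem continuousOn_volterraConv (ha : 0 ≤ a)
    (hK : ∀ x, ContinuousOn (fun t => K t x) (Icc 0 a)) (hKM : ∀ t ∈ Icc 0 a, ‖K t‖ ≤ M)
    (hg : ContinuousOn g (Icc t₀ (t₀ + a))) :
    ContinuousOn (volterraConv K t₀ g) (Icc t₀ (t₀ + a)) := by
  obtain ⟨G, hGc, hG⟩ := exists_continuous_extension_volterra_integrand ha hK hKM hg
  refine (continuous_parametric_intervalIntegral_of_continuous hGc continuous_id).continuousOn.congr
    fun t ht => integral_congr fun s hs => ?_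
  rw [uIcc_of_le ht.1] at hs
  exact (hG t ht s hs).symm

theorem volterraConv_sub (ha : 0 ≤ a)
    (hK : ∀ x, ContinuousOn (fun t => K t x) (Icc 0 a)) (hKM : ∀ t ∈ Icc 0 a, ‖K t‖ ≤ M)
    (hg : ContinuousOn g (Icc t₀ (t₀ + a))) (hh : ContinuousOn h (Icc t₀ (t₀ + a)))
    (hτ : τ ∈ Icc t₀ (t₀ + a)) :
    volterraConv K t₀ g τ - volterraConv K t₀ h τ = volterraConv K t₀ (g - h) τ := by
  simp only [volterraConv, Pi.sub_apply, map_sub]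
  exact (integral_sub (intervalIntegrable_volterra_integrand ha hK hKM hg hτ)
    (intervalIntegrable_volterra_integrand ha hK hKM hh hτ)).symm

theorem norm_volterraConv_le (hKM : ∀ t ∈ Icc 0 a, ‖K t‖ ≤ M) (hτ : τ ∈ Icc t₀ (t₀ + a))
    (hgC : ∀ s ∈ Ioc t₀ τ, ‖g s‖ ≤ C) :
    ‖volterraConv K t₀ g τ‖ ≤ M * C * (τ - t₀) := by
  rw [← abs_of_nonneg (sub_nonneg.2 hτ.1)]
  refine norm_integral_le_of_norm_le_const fun s hs => ?_
  rw [uIoc_of_le hτ.1] at hs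
  have hts : τ - s ∈ Icc 0 a := ⟨by linarith [hs.2], by linarith [hs.1, hτ.2]⟩
  calc ‖K (τ - s) (g s)‖ ≤ ‖K (τ - s)‖ * C := (K _).le_opNorm_of_le (hgC s hs)
    _ ≤ M * C := mul_le_mul_of_nonneg_right (hKM _ hts) ((norm_nonneg _).trans (hgC s hs))

end Volterra

section FractionalIntegral

variable {E : Type*} [NormedAddCommGroup E] [NormedSpace ℝ E] {δ t₀ c C : ℝ} {g h : ℝ → E}

theorem intervalIntegrable_sub_rpow (hδ : 0 < δ) :
    IntervalIntegrable (fun s => (c - s) ^ (δ - 1)) volume t₀ c := by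
  simpa using (intervalIntegrable_rpow' (r := δ - 1) (a := c - t₀) (b := c - c)
    (by linarith)).comp_sub_left c

theorem integral_sub_rpow (hδ : 0 < δ) :
    ∫ s in t₀..c, (c - s) ^ (δ - 1) = (c - t₀) ^ δ / δ := by
  rw [integral_comp_sub_left (fun x => x ^ (δ - 1)), sub_self,
    integral_rpow (Or.inl (by linarith)), sub_add_cancel, Real.zero_rpow hδ.ne', sub_zero]

theorem fracInt_sub (hδ : 0 < δ) (hg : ContinuousOn g (uIcc t₀ c))
    (hh : ContinuousOn h (uIcc t₀ c)) :
    fracInt δ t₀ g c - fracInt δ t₀ h c = fracInt δ t₀ (g - h) c := by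
  simp only [fracInt, Pi.sub_apply, smul_sub]
  rw [integral_sub ((intervalIntegrable_sub_rpow hδ).smul_continuousOn hg)
    ((intervalIntegrable_sub_rpow hδ).smul_continuousOn hh), smul_sub]

theorem norm_fracInt_le (hδ : 0 < δ) (htc : t₀ ≤ c) (hgC : ∀ s ∈ Ioc t₀ c, ‖g s‖ ≤ C) :
    ‖fracInt δ t₀ g c‖ ≤ (c - t₀) ^ δ / Real.Gamma (δ + 1) * C := by
  have hint : ‖∫ s in t₀..c, (c - s) ^ (δ - 1) • g s‖ ≤ ∫ s in t₀..c, (c - s) ^ (δ - 1) * C := by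
    refine norm_integral_le_of_norm_le htc (ae_of_all _ fun s hs => ?_)
      ((intervalIntegrable_sub_rpow hδ).mul_const C)
    rw [norm_smul, Real.norm_of_nonneg (Real.rpow_nonneg (by linarith [hs.2]) _)]
    exact mul_le_mul_of_nonneg_left (hgC s hs) (Real.rpow_nonneg (by linarith [hs.2]) _)
  rw [intervalIntegral.integral_mul_const, integral_sub_rpow hδ] at hint
  rw [fracInt, norm_smul, Real.norm_of_nonneg (by positivity), Real.Gamma_add_one hδ.ne']
  calc 1 / Real.Gamma δ * ‖∫ s in t₀..c, (c - s) ^ (δ - 1) • g s‖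
      ≤ 1 / Real.Gamma δ * ((c - t₀) ^ δ / δ * C) := by gcongr
    _ = (c - t₀) ^ δ / (δ * Real.Gamma δ) * C := by field_simp

theorem norm_fracInt_sub_le {a A : ℝ} (hδ : 0 < δ) (hc : c ∈ Icc t₀ (t₀ + a))
    (hg : ContinuousOn g (Icc t₀ (t₀ + a))) (hh : ContinuousOn h (Icc t₀ (t₀ + a)))
    (hA : ∀ s ∈ Icc t₀ (t₀ + a), ‖g s - h s‖ ≤ A) :
    ‖fracInt δ t₀ g c - fracInt δ t₀ h c‖ ≤ a ^ δ / Real.Gamma (δ + 1) * A := by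
  have hsub : uIcc t₀ c ⊆ Icc t₀ (t₀ + a) := by
    rw [uIcc_of_le hc.1]
    exact Icc_subset_Icc le_rfl hc.2
  rw [fracInt_sub hδ (hg.mono hsub) (hh.mono hsub)]
  refine (norm_fracInt_le hδ hc.1 fun s hs => hA s ⟨hs.1.le, hs.2.trans hc.2⟩).trans ?_
  have hA0 : 0 ≤ A := (norm_nonneg _).trans (hA c hc)
  exact mul_le_mul_of_nonneg_right (div_le_div_of_nonneg_right
    (Real.rpow_le_rpow (sub_nonneg.2 hc.1) (by linarith [hc.2]) hδ.le)
    (Real.Gamma_pos_of_pos (by linarith)).le) hA0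

end FractionalIntegral

section Arguments

variable {Ω : Type*} {r : ℕ} {b : Fin r → ℝ → ℝ} {ω ωp : ℝ → Ω} {J : Set ℝ}

theorem continuousOn_fArgs [TopologicalSpace Ω] (hω : ContinuousOn ω J)
    (hb : ∀ i, ContinuousOn (b i) J) (hbJ : ∀ i, MapsTo (b i) J J) :
    ContinuousOn (fArgs b ω) J := by
  refine continuousOn_pi.2 fun i => Fin.cases ?_ (fun j => ?_) i
  · simpa only [fArgs, Fin.cons_zero] using hω
  · simpa only [fArgs, Fin.cons_succ, Function.comp_def] using hω.comp (hb j) (hbJ j)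

theorem continuousOn_apply_fArgs [TopologicalSpace Ω] {f : ℝ → (Fin (r + 1) → Ω) → Ω}
    (hf : Continuous fun q : ℝ × (Fin (r + 1) → Ω) => f q.1 q.2) (hω : ContinuousOn ω J)
    (hb : ∀ i, ContinuousOn (b i) J) (hbJ : ∀ i, MapsTo (b i) J J) :
    ContinuousOn (fun s => f s (fArgs b ω s)) J :=
  hf.comp_continuousOn (continuousOn_id.prodMk (continuousOn_fArgs hω hb hbJ))

theorem sum_norm_fArgs_sub_le [SeminormedAddCommGroup Ω] {D s : ℝ} (hs : s ∈ J)
    (hbJ : ∀ i, MapsTo (b i) J J) (hD : ∀ u ∈ J, ‖ω u - ωp u‖ ≤ D) :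
    ∑ i, ‖fArgs b ω s i - fArgs b ωp s i‖ ≤ (r + 1) * D := by
  calc ∑ i, ‖fArgs b ω s i - fArgs b ωp s i‖
      = ‖ω s - ωp s‖ + ∑ j, ‖ω (b j s) - ωp (b j s)‖ := by
        simp only [Fin.sum_univ_succ, fArgs, Fin.cons_zero, Fin.cons_succ]
    _ ≤ D + ∑ _j : Fin r, D :=
        add_le_add (hD s hs) (Finset.sum_le_sum fun j _ => hD _ (hbJ j hs))
    _ = (r + 1) * D := by
        simp only [Finset.sum_const, Finset.card_univ, Fintype.card_fin, nsmul_eq_mul]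
        ring

theorem norm_apply_fArgs_sub_le [SeminormedAddCommGroup Ω] {f : ℝ → (Fin (r + 1) → Ω) → Ω}
    {L D : ℝ}
    (hfLip : ∀ s ∈ J, ∀ z zp : Fin (r + 1) → Ω, ‖f s z - f s zp‖ ≤ L * ∑ i, ‖z i - zp i‖)
    (hL : 0 ≤ L) (hbJ : ∀ i, MapsTo (b i) J J) (hD : ∀ u ∈ J, ‖ω u - ωp u‖ ≤ D) :
    ∀ s ∈ J, ‖f s (fArgs b ω s) - f s (fArgs b ωp s)‖ ≤ (r + 1) * L * D := fun s hs =>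
  (hfLip s hs _ _).trans <|
    (mul_le_mul_of_nonneg_left (sum_norm_fArgs_sub_le hs hbJ hD) hL).trans_eq (by ring)

end Arguments

section SolutionOperator

variable {Ω : Type*} [NormedAddCommGroup Ω] [NormedSpace ℝ Ω] {r p : ℕ}
  {S K : ℝ → Ω →L[ℝ] Ω} {t₀ a γ M t : ℝ} {B : Ω →L[ℝ] Ω} {u₀ : Ω} {tk Ck : Fin p → ℝ}
  {f : ℝ → (Fin (r + 1) → Ω) → Ω} {b : Fin r → ℝ → ℝ} {ω ωp : ℝ → Ω}

theorem convMap_eq_volterraConv :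
    convMap K t₀ f b ω = volterraConv K t₀ (fun s => f s (fArgs b ω s)) := rfl

theorem continuousOn_convMap (ha : 0 ≤ a)
    (hKcont : ∀ x : Ω, ContinuousOn (fun t => K t x) (Icc 0 a))
    (hKbd : ∀ t ∈ Icc (0 : ℝ) a, ‖K t‖ ≤ M)
    (hbcont : ∀ i, ContinuousOn (b i) (Icc t₀ (t₀ + a)))
    (hbmaps : ∀ i, MapsTo (b i) (Icc t₀ (t₀ + a)) (Icc t₀ (t₀ + a)))
    (hfcont : Continuous fun q : ℝ × (Fin (r + 1) → Ω) => f q.1 q.2)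
    (hω : ContinuousOn ω (Icc t₀ (t₀ + a))) :
    ContinuousOn (convMap K t₀ f b ω) (Icc t₀ (t₀ + a)) :=
  continuousOn_volterraConv ha hKcont hKbd (continuousOn_apply_fArgs hfcont hω hbcont hbmaps)

theorem continuousOn_Fop (ha : 0 ≤ a) (hScont : ∀ x : Ω, ContinuousOn (fun t => S t x) (Icc 0 a))
    (hKcont : ∀ x : Ω, ContinuousOn (fun t => K t x) (Icc 0 a))
    (hKbd : ∀ t ∈ Icc (0 : ℝ) a, ‖K t‖ ≤ M)
    (hbcont : ∀ i, ContinuousOn (b i) (Icc t₀ (t₀ + a)))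
    (hbmaps : ∀ i, MapsTo (b i) (Icc t₀ (t₀ + a)) (Icc t₀ (t₀ + a)))
    (hfcont : Continuous fun q : ℝ × (Fin (r + 1) → Ω) => f q.1 q.2)
    (hω : ContinuousOn ω (Icc t₀ (t₀ + a))) :
    ContinuousOn (Fop S K t₀ γ B u₀ tk Ck f b ω) (Icc t₀ (t₀ + a)) := by
  have hS : ∀ x, ContinuousOn (fun t => S (t - t₀) x) (Icc t₀ (t₀ + a)) := fun x =>
    (hScont x).comp (continuousOn_id.sub continuousOn_const) fun t ht =>
      ⟨sub_nonneg.2 ht.1, by linarith [ht.2]⟩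
  exact ((hS _).add (continuousOn_convMap ha hKcont hKbd hbcont hbmaps hfcont hω)).sub (hS _)

theorem norm_convMap_sub_le {L D τ : ℝ} (ha : 0 ≤ a)
    (hKcont : ∀ x : Ω, ContinuousOn (fun t => K t x) (Icc 0 a))
    (hKbd : ∀ t ∈ Icc (0 : ℝ) a, ‖K t‖ ≤ M)
    (hbcont : ∀ i, ContinuousOn (b i) (Icc t₀ (t₀ + a)))
    (hbmaps : ∀ i, MapsTo (b i) (Icc t₀ (t₀ + a)) (Icc t₀ (t₀ + a)))
    (hfcont : Continuous fun q : ℝ × (Fin (r + 1) → Ω) => f q.1 q.2)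
    (hfLip : ∀ s ∈ Icc t₀ (t₀ + a), ∀ z zp : Fin (r + 1) → Ω,
      ‖f s z - f s zp‖ ≤ L * ∑ i, ‖z i - zp i‖) (hL : 0 ≤ L)
    (hω : ContinuousOn ω (Icc t₀ (t₀ + a))) (hωp : ContinuousOn ωp (Icc t₀ (t₀ + a)))
    (hD : ∀ u ∈ Icc t₀ (t₀ + a), ‖ω u - ωp u‖ ≤ D) (hτ : τ ∈ Icc t₀ (t₀ + a)) :
    ‖convMap K t₀ f b ω τ - convMap K t₀ f b ωp τ‖ ≤ M * ((r + 1) * L * D) * a := by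
  have hfD := norm_apply_fArgs_sub_le hfLip hL hbmaps hD
  have hM : 0 ≤ M := (norm_nonneg _).trans (hKbd 0 ⟨le_rfl, ha⟩)
  have hC : 0 ≤ ((r : ℝ) + 1) * L * D := (norm_nonneg _).trans (hfD t₀ ⟨le_rfl, by linarith⟩)
  rw [convMap_eq_volterraConv, convMap_eq_volterraConv, volterraConv_sub ha hKcont hKbd
    (continuousOn_apply_fArgs hfcont hω hbcont hbmaps)
    (continuousOn_apply_fArgs hfcont hωp hbcont hbmaps) hτ]
  refine (norm_volterraConv_le hKbd hτ fun s hs => hfD s ⟨hs.1.le, hs.2.trans hτ.2⟩).trans ?_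
  exact mul_le_mul_of_nonneg_left (by linarith [hτ.2]) (mul_nonneg hM hC)

theorem norm_Fop_sub_le {A A' : ℝ} (hS : ‖S (t - t₀)‖ ≤ M)
    (hconv : ‖convMap K t₀ f b ω t - convMap K t₀ f b ωp t‖ ≤ A)
    (hfrac : ∀ k, ‖fracInt (1 - γ) t₀ (convMap K t₀ f b ω) (tk k)
      - fracInt (1 - γ) t₀ (convMap K t₀ f b ωp) (tk k)‖ ≤ A') :
    ‖Fop S K t₀ γ B u₀ tk Ck f b ω t - Fop S K t₀ γ B u₀ tk Ck f b ωp t‖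
      ≤ A + M * ‖B‖ * (∑ k, |Ck k|) * A' := by
  set w := ∑ k, Ck k • (fracInt (1 - γ) t₀ (convMap K t₀ f b ω) (tk k)
    - fracInt (1 - γ) t₀ (convMap K t₀ f b ωp) (tk k))
  have hw : ‖w‖ ≤ (∑ k, |Ck k|) * A' := by
    refine (norm_sum_le _ _).trans ?_
    simpa only [norm_smul, Real.norm_eq_abs, Finset.sum_mul] using
      Finset.sum_le_sum fun k _ => mul_le_mul_of_nonneg_left (hfrac k) (abs_nonneg (Ck k))
  have hM : 0 ≤ M := (norm_nonneg _).trans hS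
  calc ‖Fop S K t₀ γ B u₀ tk Ck f b ω t - Fop S K t₀ γ B u₀ tk Ck f b ωp t‖
      = ‖(convMap K t₀ f b ω t - convMap K t₀ f b ωp t) - S (t - t₀) (B w)‖ := by
        simp only [Fop, w, smul_sub, Finset.sum_sub_distrib, map_sub]
        abel_nf
    _ ≤ A + M * (‖B‖ * ((∑ k, |Ck k|) * A')) := by
        refine norm_sub_le_of_le hconv ((S _).le_of_opNorm_le_of_le hS ?_)
        exact B.le_of_opNorm_le_of_le le_rfl hw
    _ = A + M * ‖B‖ * (∑ k, |Ck k|) * A' := by ring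

end SolutionOperator

theorem Fop_lipschitz_general {Ω : Type*} [NormedAddCommGroup Ω] [NormedSpace ℝ Ω]
    {r p : ℕ}
    (t₀ a γ M L : ℝ) (ha : 0 < a) (hγ1 : γ < 1)
    (S K : ℝ → Ω →L[ℝ] Ω)
    (hScont : ∀ x : Ω, ContinuousOn (fun t => S t x) (Icc 0 a))
    (hKcont : ∀ x : Ω, ContinuousOn (fun t => K t x) (Icc 0 a))
    (hSbd : ∀ t ∈ Icc (0 : ℝ) a, ‖S t‖ ≤ M)
    (hKbd : ∀ t ∈ Icc (0 : ℝ) a, ‖K t‖ ≤ M)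
    (tk : Fin p → ℝ)
    (htkJ : ∀ k, tk k ∈ Icc t₀ (t₀ + a))
    (Ck : Fin p → ℝ)
    (B : Ω →L[ℝ] Ω) (u₀ : Ω)
    (b : Fin r → ℝ → ℝ)
    (hbcont : ∀ i, ContinuousOn (b i) (Icc t₀ (t₀ + a)))
    (hbmaps : ∀ i, MapsTo (b i) (Icc t₀ (t₀ + a)) (Icc t₀ (t₀ + a)))
    (f : ℝ → (Fin (r + 1) → Ω) → Ω)
    (hfcont : Continuous fun q : ℝ × (Fin (r + 1) → Ω) => f q.1 q.2)
    (hfLip : ∀ s ∈ Icc t₀ (t₀ + a), ∀ z zp : Fin (r + 1) → Ω,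
      ‖f s z - f s zp‖ ≤ L * ∑ i, ‖z i - zp i‖) :
    (∀ ω : ℝ → Ω, ContinuousOn ω (Icc t₀ (t₀ + a)) →
      ContinuousOn (Fop S K t₀ γ B u₀ tk Ck f b ω) (Icc t₀ (t₀ + a))) ∧
    (∀ ω ωp : ℝ → Ω, ContinuousOn ω (Icc t₀ (t₀ + a)) →
      ContinuousOn ωp (Icc t₀ (t₀ + a)) →
      (⨆ t : Icc t₀ (t₀ + a),
          ‖Fop S K t₀ γ B u₀ tk Ck f b ω t - Fop S K t₀ γ B u₀ tk Ck f b ωp t‖)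
        ≤ ((r : ℝ) + 1) * L * M * a *
            (1 + M * ‖B‖ * (a ^ (1 - γ) / Real.Gamma (2 - γ)) * ∑ k, |Ck k|) *
          ⨆ t : Icc t₀ (t₀ + a), ‖ω t - ωp t‖) := by
  refine ⟨fun ω hω => continuousOn_Fop ha.le hScont hKcont hKbd hbcont hbmaps hfcont hω,
    fun ω ωp hω hωp => ?_⟩
  -- On a nontrivial space the Lipschitz hypothesis forces `0 ≤ L`.
  rcases subsingleton_or_nontrivial Ω with hΩ | hΩ
  · simp [Subsingleton.elim _ (0 : Ω)]
  have ht₀ : t₀ ∈ Icc t₀ (t₀ + a) := ⟨le_rfl, by linarith⟩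
  have : Nonempty (Icc t₀ (t₀ + a)) := ⟨⟨t₀, ht₀⟩⟩
  have hL : 0 ≤ L := nonneg_of_norm_sub_le_mul_sum_norm_sub (hfLip t₀ ht₀)
  set D := ⨆ t : Icc t₀ (t₀ + a), ‖ω t - ωp t‖
  have hD : ∀ u ∈ Icc t₀ (t₀ + a), ‖ω u - ωp u‖ ≤ D := fun u hu =>
    isCompact_Icc.norm_le_iSup_norm (φ := fun t => ω t - ωp t) (hω.sub hωp) hu
  have hconv := fun τ (hτ : τ ∈ Icc t₀ (t₀ + a)) =>
    norm_convMap_sub_le ha.le hKcont hKbd hbcont hbmaps hfcont hfLip hL hω hωp hD hτ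
  have hcont := fun ω (hω : ContinuousOn ω (Icc t₀ (t₀ + a))) =>
    continuousOn_convMap ha.le hKcont hKbd hbcont hbmaps hfcont hω
  calc (⨆ t : Icc t₀ (t₀ + a),
        ‖Fop S K t₀ γ B u₀ tk Ck f b ω t - Fop S K t₀ γ B u₀ tk Ck f b ωp t‖)
      ≤ M * ((r + 1) * L * D) * a + M * ‖B‖ * (∑ k, |Ck k|) *
          (a ^ (1 - γ) / Real.Gamma (1 - γ + 1) * (M * ((r + 1) * L * D) * a)) :=
        ciSup_le fun t => norm_Fop_sub_le (hSbd _ ⟨sub_nonneg.2 t.2.1, by linarith [t.2.2]⟩)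
          (hconv t t.2) fun k =>
            norm_fracInt_sub_le (by linarith) (htkJ k) (hcont ω hω) (hcont ωp hωp) hconv
    _ = _ := by
        rw [show 1 - γ + 1 = 2 - γ by ring]
        ring

/-- The operator `F` maps `C(J, Ω)` into itself and is Lipschitz for the sup norm, with
constant `q̃ = (r+1) L M a (1 + M ‖B‖ C̃ ∑_{k=1}^p |C_k|)`, where
`C̃ = a^(1-γ)/Γ(2-γ)`. -/
theorem Fop_lipschitz {Ω : Type*} [NormedAddCommGroup Ω] [NormedSpace ℝ Ω]
    [CompleteSpace Ω] {r p : ℕ}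
    (t₀ a γ M L : ℝ) (ht₀ : 0 ≤ t₀) (ha : 0 < a) (hγ0 : 0 ≤ γ) (hγ1 : γ < 1)
    (S K : ℝ → Ω →L[ℝ] Ω)
    (hScont : ∀ x : Ω, ContinuousOn (fun t => S t x) (Icc 0 a))
    (hKcont : ∀ x : Ω, ContinuousOn (fun t => K t x) (Icc 0 a))
    (hSbd : ∀ t ∈ Icc (0 : ℝ) a, ‖S t‖ ≤ M)
    (hKbd : ∀ t ∈ Icc (0 : ℝ) a, ‖K t‖ ≤ M)
    (tk : Fin p → ℝ) (htk : StrictMono tk)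
    (htkJ : ∀ k, tk k ∈ Icc t₀ (t₀ + a))
    (Ck : Fin p → ℝ) (hCk : ∀ k, Ck k ≠ 0)
    (B : Ω →L[ℝ] Ω) (u₀ : Ω)
    (b : Fin r → ℝ → ℝ)
    (hbcont : ∀ i, ContinuousOn (b i) (Icc t₀ (t₀ + a)))
    (hbmaps : ∀ i, MapsTo (b i) (Icc t₀ (t₀ + a)) (Icc t₀ (t₀ + a)))
    (f : ℝ → (Fin (r + 1) → Ω) → Ω)
    (hfcont : Continuous fun q : ℝ × (Fin (r + 1) → Ω) => f q.1 q.2)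
    (hfLip : ∀ s ∈ Icc t₀ (t₀ + a), ∀ z zp : Fin (r + 1) → Ω,
      ‖f s z - f s zp‖ ≤ L * ∑ i, ‖z i - zp i‖) :
    (∀ ω : ℝ → Ω, ContinuousOn ω (Icc t₀ (t₀ + a)) →
      ContinuousOn (Fop S K t₀ γ B u₀ tk Ck f b ω) (Icc t₀ (t₀ + a))) ∧
    (∀ ω ωp : ℝ → Ω, ContinuousOn ω (Icc t₀ (t₀ + a)) →
      ContinuousOn ωp (Icc t₀ (t₀ + a)) →
      (⨆ t : Icc t₀ (t₀ + a),
          ‖Fop S K t₀ γ B u₀ tk Ck f b ω t - Fop S K t₀ γ B u₀ tk Ck f b ωp t‖)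
        ≤ ((r : ℝ) + 1) * L * M * a *
            (1 + M * ‖B‖ * (a ^ (1 - γ) / Real.Gamma (2 - γ)) * ∑ k, |Ck k|) *
          ⨆ t : Icc t₀ (t₀ + a), ‖ω t - ωp t‖) :=
  Fop_lipschitz_general t₀ a γ M L ha hγ1 S K hScont hKcont hSbd hKbd tk htkJ Ck B u₀ b hbcont
    hbmaps f hfcont hfLip
end

section
/- With the data of the nonlocal fractional evolution setup, let Ŝ_k := (1/Γ(1−γ)) ∫_{t₀}^{t_k} (t_k − s)^{−γ} S(s − t₀) ds (an operator-valued Bochner integral, so that Ŝ_k x = (I_{t₀⁺}^{1−γ} [s ↦ S(s−t₀)x])(t_k) for every x ∈ Ω), and assume that the bounded operator B is a two-sided inverse of I + Σ_{k=1}^p C_k Ŝ_k. Let G : J → Ω be continuous, set h(τ) := ∫_{t₀}^τ K(τ−s) G(s) ds, w := Σ_{k=1}^p C_k (I_{t₀⁺}^{1−γ} h)(t_k), x := B u₀ − B w, and define u(t) := S(t−t₀) x + ∫_{t₀}^t K(t−s) G(s) ds for t ∈ J. Then x + Σ_{k=1}^p C_k (I_{t₀⁺}^{1−γ} u)(t_k)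 = u₀; i.e., the function given by the mild-solution formula satisfies the nonlocal initial condition. -/
/-!
Since `u = S(· - t₀) x + h` and the fractional integral is additive on continuous functions,
`∑ C_k (I^{1-γ} u)(t_k) = (∑ C_k Ŝ_k) x + w`. Hence the left-hand side equals
`(I + ∑ C_k Ŝ_k) (B (u₀ - w)) + w = u₀`. The only analytic input is the continuity of `h`,
which makes `s ↦ (t_k - s)^(-γ) • h s` integrable; it follows from the joint continuity of
`(t, y) ↦ K t y` for a bounded, strongly continuous family.
-/

open Set intervalIntegral

section

open Filter Topology MeasureTheory

section StronglyContinuous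

variable {X 𝕜 E F : Type*} [TopologicalSpace X] [NontriviallyNormedField 𝕜]
  [NormedAddCommGroup E] [NormedSpace 𝕜 E] [NormedAddCommGroup F] [NormedSpace 𝕜 F]

theorem continuous_clm_apply_of_norm_le {T : X → E →L[𝕜] F} {M : ℝ} (hb : ∀ t, ‖T t‖ ≤ M)
    (hc : ∀ y, Continuous fun t => T t y) : Continuous fun p : X × E => T p.1 p.2 := by
  refine continuous_iff_continuousAt.2 fun ⟨t, y⟩ => ?_
  have hsmall : Tendsto (fun p : X × E => T p.1 (p.2 - y)) (𝓝 (t, y)) (𝓝 0) := by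
    refine squeeze_zero_norm (fun p => (T p.1).le_of_opNorm_le (hb p.1) _) ?_
    simpa using ((continuous_snd.sub (continuous_const (y := y))).norm.const_mul M).tendsto (t, y)
  have hfixed : Tendsto (fun p : X × E => T p.1 y) (𝓝 (t, y)) (𝓝 (T t y)) :=
    ((hc y).comp continuous_fst).tendsto (t, y)
  show Tendsto _ _ _
  simpa using hsmall.add hfixed

end StronglyContinuous

variable {E F : Type*} [NormedAddCommGroup E] [NormedSpace ℝ E]
  [NormedAddCommGroup F] [NormedSpace ℝ F]

theorem continuousOn_integral_clm_apply_sub {K : ℝ → E →L[ℝ] F} {G : ℝ → E} {t₀ a M : ℝ}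
    (hK : ∀ y, ContinuousOn (fun t => K t y) (Icc 0 a)) (hKbd : ∀ t ∈ Icc 0 a, ‖K t‖ ≤ M)
    (hG : ContinuousOn G (Icc t₀ (t₀ + a))) :
    ContinuousOn (fun τ => ∫ s in t₀..τ, K (τ - s) (G s)) (Icc t₀ (t₀ + a)) := by
  rcases lt_or_ge a 0 with ha | ha
  · simp [Icc_eq_empty (by linarith : ¬t₀ ≤ t₀ + a)]
  have ha' : t₀ ≤ t₀ + a := by linarith
  -- Clamping the arguments to the intervals makes the data globally continuous.
  set K' : ℝ → E →L[ℝ] F := fun t => K (projIcc 0 a ha t)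
  set G' : ℝ → E := fun s => G (projIcc t₀ (t₀ + a) ha' s)
  have hK' : Continuous fun p : ℝ × E => K' p.1 p.2 :=
    continuous_clm_apply_of_norm_le (fun t => hKbd _ (projIcc 0 a ha t).2) fun y =>
      (hK y).comp_continuous (continuous_subtype_val.comp continuous_projIcc) fun t =>
        (projIcc 0 a ha t).2
  have hG' : Continuous G' :=
    hG.comp_continuous (continuous_subtype_val.comp continuous_projIcc) fun s =>
      (projIcc t₀ (t₀ + a) ha' s).2
  have hconv : Continuous fun τ => ∫ s in t₀..τ, K' (τ - s) (G' s) :=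
    continuous_parametric_intervalIntegral_of_continuous (f := fun τ s => K' (τ - s) (G' s))
      (hK'.comp ((continuous_fst.sub continuous_snd).prodMk (hG'.comp continuous_snd)))
      continuous_id
  refine hconv.continuousOn.congr fun τ hτ => integral_congr fun s hs => ?_
  rw [uIcc_of_le hτ.1] at hs
  simp only [K', G', projIcc_of_mem _ (⟨by linarith [hs.2], by linarith [hs.1, hτ.2]⟩ :
    τ - s ∈ Icc 0 a), projIcc_of_mem _ (⟨hs.1, hs.2.trans hτ.2⟩ : s ∈ Icc t₀ (t₀ + a))]

theorem intervalIntegrable_rpow_sub_smul {δ t₀ t : ℝ} (hδ : 0 < δ) (ht : t₀ ≤ t) {g : ℝ → E}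
    (hg : ContinuousOn g (Icc t₀ t)) :
    IntervalIntegrable (fun s => (t - s) ^ (δ - 1) • g s) volume t₀ t := by
  have hkernel : IntervalIntegrable (fun s : ℝ => (t - s) ^ (δ - 1)) volume t₀ t := by
    simpa using ((intervalIntegrable_rpow' (by linarith : -1 < δ - 1)).symm.comp_sub_left t
      : IntervalIntegrable _ volume (t - (t - t₀)) (t - 0))
  rw [intervalIntegrable_iff_integrableOn_Icc_of_le ht] at hkernel ⊢
  exact hkernel.smul_continuousOn hg isCompact_Icc

theorem fracInt_add {δ t₀ t : ℝ} (hδ : 0 < δ) (ht : t₀ ≤ t) {f g : ℝ → E}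
    (hf : ContinuousOn f (Icc t₀ t)) (hg : ContinuousOn g (Icc t₀ t)) :
    fracInt δ t₀ (f + g) t = fracInt δ t₀ f t + fracInt δ t₀ g t := by
  simp only [fracInt, Pi.add_apply, smul_add,
    integral_add (intervalIntegrable_rpow_sub_smul hδ ht hf)
      (intervalIntegrable_rpow_sub_smul hδ ht hg)]

end

theorem mild_formula_satisfies_nonlocal_condition_general {Ω : Type*} [NormedAddCommGroup Ω]
    [NormedSpace ℝ Ω] {p : ℕ}
    (t₀ a γ M : ℝ) (hγ1 : γ < 1)
    (S K : ℝ → Ω →L[ℝ] Ω)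
    (hScont : ∀ x : Ω, ContinuousOn (fun t => S t x) (Icc 0 a))
    (hKcont : ∀ x : Ω, ContinuousOn (fun t => K t x) (Icc 0 a))
    (hKbd : ∀ t ∈ Icc (0 : ℝ) a, ‖K t‖ ≤ M)
    (tk : Fin p → ℝ)
    (htkJ : ∀ k, tk k ∈ Icc t₀ (t₀ + a))
    (Ck : Fin p → ℝ)
    (B : Ω →L[ℝ] Ω) (u₀ : Ω)
    (Shat : Fin p → Ω →L[ℝ] Ω)
    (hShat : ∀ (k : Fin p) (x : Ω),
      Shat k x = fracInt (1 - γ) t₀ (fun s => S (s - t₀) x) (tk k))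
    (hB₂ : (ContinuousLinearMap.id ℝ Ω + ∑ k, Ck k • Shat k).comp B =
      ContinuousLinearMap.id ℝ Ω)
    (G : ℝ → Ω) (hG : ContinuousOn G (Icc t₀ (t₀ + a)))
    (h : ℝ → Ω) (hh : ∀ τ, h τ = ∫ s in t₀..τ, (K (τ - s)) (G s))
    (w : Ω) (hw : w = ∑ k, Ck k • fracInt (1 - γ) t₀ h (tk k))
    (x : Ω) (hx : x = B u₀ - B w)
    (u : ℝ → Ω) (hu : ∀ t, u t = S (t - t₀) x + ∫ s in t₀..t, (K (t - s)) (G s)) :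
    x + ∑ k, Ck k • fracInt (1 - γ) t₀ u (tk k) = u₀ := by
  have hh_cont : ContinuousOn h (Icc t₀ (t₀ + a)) := by
    simpa only [← hh] using continuousOn_integral_clm_apply_sub hKcont hKbd hG
  have hu_eq : u = (fun s => S (s - t₀) x) + h := funext fun t => by simp [hu, hh]
  have hfrac : ∀ k, fracInt (1 - γ) t₀ u (tk k) = Shat k x + fracInt (1 - γ) t₀ h (tk k) := by
    intro k
    obtain ⟨hk₀, hka⟩ := htkJ k
    rw [hu_eq, hShat, fracInt_add (by linarith) hk₀ _ (hh_cont.mono (Icc_subset_Icc_right hka))]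
    exact (hScont x).comp (by fun_prop) fun s hs => ⟨by linarith [hs.1], by linarith [hs.2]⟩
  calc x + ∑ k, Ck k • fracInt (1 - γ) t₀ u (tk k)
      = (ContinuousLinearMap.id ℝ Ω + ∑ k, Ck k • Shat k) (B (u₀ - w)) + w := by
        simp [hfrac, hw, hx, smul_add, Finset.sum_add_distrib, add_assoc]
    _ = u₀ := by
        rw [← ContinuousLinearMap.comp_apply, hB₂]
        simp

/-- The function given by the mild-solution formula satisfies the nonlocal initial
condition: with `Ŝ_k x = (I_{t₀⁺}^{1-γ}[s ↦ S(s-t₀) x])(t_k)`, `B` a two-sided inverse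
of `I + ∑_k C_k Ŝ_k`, `h(τ) = ∫_{t₀}^τ K(τ-s) G(s) ds`,
`w = ∑_k C_k (I_{t₀⁺}^{1-γ} h)(t_k)`, `x = B u₀ - B w` and
`u(t) = S(t-t₀) x + ∫_{t₀}^t K(t-s) G(s) ds`, one has
`x + ∑_k C_k (I_{t₀⁺}^{1-γ} u)(t_k) = u₀`. -/
theorem mild_formula_satisfies_nonlocal_condition {Ω : Type*} [NormedAddCommGroup Ω]
    [NormedSpace ℝ Ω] [CompleteSpace Ω] {p : ℕ}
    (t₀ a γ M : ℝ) (ht₀ : 0 ≤ t₀) (ha : 0 < a) (hγ0 : 0 ≤ γ) (hγ1 : γ < 1)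
    (S K : ℝ → Ω →L[ℝ] Ω)
    (hScont : ∀ x : Ω, ContinuousOn (fun t => S t x) (Icc 0 a))
    (hKcont : ∀ x : Ω, ContinuousOn (fun t => K t x) (Icc 0 a))
    (hSbd : ∀ t ∈ Icc (0 : ℝ) a, ‖S t‖ ≤ M)
    (hKbd : ∀ t ∈ Icc (0 : ℝ) a, ‖K t‖ ≤ M)
    (tk : Fin p → ℝ) (htk : StrictMono tk)
    (htkJ : ∀ k, tk k ∈ Icc t₀ (t₀ + a))
    (Ck : Fin p → ℝ) (hCk : ∀ k, Ck k ≠ 0)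
    (B : Ω →L[ℝ] Ω) (u₀ : Ω)
    (Shat : Fin p → Ω →L[ℝ] Ω)
    (hShat : ∀ (k : Fin p) (x : Ω),
      Shat k x = fracInt (1 - γ) t₀ (fun s => S (s - t₀) x) (tk k))
    (hB₁ : B.comp (ContinuousLinearMap.id ℝ Ω + ∑ k, Ck k • Shat k) =
      ContinuousLinearMap.id ℝ Ω)
    (hB₂ : (ContinuousLinearMap.id ℝ Ω + ∑ k, Ck k • Shat k).comp B =
      ContinuousLinearMap.id ℝ Ω)
    (G : ℝ → Ω) (hG : ContinuousOn G (Icc t₀ (t₀ + a)))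
    (h : ℝ → Ω) (hh : ∀ τ, h τ = ∫ s in t₀..τ, (K (τ - s)) (G s))
    (w : Ω) (hw : w = ∑ k, Ck k • fracInt (1 - γ) t₀ h (tk k))
    (x : Ω) (hx : x = B u₀ - B w)
    (u : ℝ → Ω) (hu : ∀ t, u t = S (t - t₀) x + ∫ s in t₀..t, (K (t - s)) (G s)) :
    x + ∑ k, Ck k • fracInt (1 - γ) t₀ u (tk k) = u₀ :=
  mild_formula_satisfies_nonlocal_condition_general t₀ a γ M hγ1 S K hScont hKcont hKbd tk htkJ Ck B
    u₀ Shat hShat hB₂ G hG h hh w hw x hx u hu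
end
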